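/- Let φ be a CNF in the QEALM fragment and suppose the minimal fork index m of φ satisfies m > 0. Then m is an outer position of φ. -/
import Mathlib


/-- Terms over variables `V` and constant symbols `K`
(Bernays–Schönfinkel: the only function symbols are constants). -/
inductive Trm (V K : Type) : Type where
  | var : V → Trm V K
  | const : K → Trm V K
deriving DecidableEq

/-- A first-order literal (no equality): a polarity, a predicate symbol
and a list of argument terms. -/
structure Lit (V K P : Type) : Type where
  pol : Bool
  pred : P
  args : List (Trm V K)
deriving DecidableEq

/-- A clause is a (finite) set of literals, read disjunctively. -/
abbrev Clause (V K P : Type) := Finset (Lit V K P)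

/-- A CNF is a list of clauses, read conjunctively,
with all variables universally quantified. -/
abbrev CNF (V K P : Type) := List (Clause V K P)

variable {V K P : Type}

/-- The argument of a literal at the (1-based) position `i`. -/
def Lit.argAt (l : Lit V K P) : ℕ → Option (Trm V K)
  | 0 => none
  | i + 1 => l.args[i]?

/-- Variable `u` occurs at argument position `i` of the literal `l`. -/
def Lit.varAt (l : Lit V K P) (u : V) (i : ℕ) : Prop := l.argAt i = some (Trm.var u)

/-- Variable `u` occurs in the literal `l`. -/
def Lit.hasVar (l : Lit V K P) (u : V) : Prop := ∃ i, l.varAt u i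

/-- `i` is the least argument position at which `u` occurs in `l`. -/
def Lit.firstOccAt (l : Lit V K P) (u : V) (i : ℕ) : Prop :=
  l.varAt u i ∧ ∀ j, l.varAt u j → i ≤ j

/-- The QEALM clause condition: whenever a variable `u` occurs in several
literals of the clause, the least position at which it occurs is the same in
all these literals, and these literals agree on all argument positions up to
(and including) that one (a shared initial segment). -/
def QEALMClause (C : Clause V K P) : Prop :=
  ∀ (u : V), ∀ l₁ ∈ C, ∀ l₂ ∈ C, l₁.hasVar u → l₂.hasVar u →
    ∃ i, l₁.firstOccAt u i ∧ l₂.firstOccAt u i ∧ ∀ j ≤ i, l₁.argAt j = l₂.argAt j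

/-- A CNF is in the QEALM fragment iff every clause satisfies the QEALM clause condition. -/
def QEALM (φ : CNF V K P) : Prop := ∀ C ∈ φ, QEALMClause C

/-- A first-order structure for the signature `(K, P)` (no equality). -/
structure Model (K P : Type) : Type 1 where
  Dom : Type
  dne : Nonempty Dom
  constVal : K → Dom
  predVal : P → List Dom → Prop

/-- Value of a term in a model under a variable assignment. -/
def Trm.val (M : Model K P) (ρ : V → M.Dom) : Trm V K → M.Dom
  | .var u => ρ u
  | .const c => M.constVal c

/-- Truth of a literal in a model under a variable assignment. -/
def Lit.holds (M : Model K P) (ρ : V → M.Dom) (l : Lit V K P) : Prop :=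
  if l.pol then M.predVal l.pred (l.args.map (Trm.val M ρ))
  else ¬ M.predVal l.pred (l.args.map (Trm.val M ρ))

/-- Truth of a clause (a disjunction of literals). -/
def Clause.holds (M : Model K P) (ρ : V → M.Dom) (C : Clause V K P) : Prop :=
  ∃ l ∈ C, l.holds M ρ

/-- First-order satisfiability (without equality) of a universally quantified CNF. -/
def CNF.Satisfiable (φ : CNF V K P) : Prop :=
  ∃ M : Model K P, ∀ ρ : V → M.Dom, ∀ C ∈ φ, C.holds M ρ

/-- Applying a substitution to a term. -/
def Trm.subst (σ : V → Trm V K) : Trm V K → Trm V K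
  | .var u => σ u
  | .const c => .const c

/-- Applying a substitution to a literal. -/
def Lit.subst (σ : V → Trm V K) (l : Lit V K P) : Lit V K P :=
  ⟨l.pol, l.pred, l.args.map (Trm.subst σ)⟩

/-- Applying a substitution to a clause. -/
def Clause.subst [DecidableEq V] [DecidableEq K] [DecidableEq P]
    (σ : V → Trm V K) (C : Clause V K P) : Clause V K P :=
  C.image (Lit.subst σ)

/-- Applying a substitution to a CNF. -/
def CNF.subst [DecidableEq V] [DecidableEq K] [DecidableEq P]
    (σ : V → Trm V K) (φ : CNF V K P) : CNF V K P :=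
  φ.map (Clause.subst σ)

/-- An outer variable of a clause: a variable appearing in every literal of the clause. -/
def OuterVar (C : Clause V K P) (u : V) : Prop := ∀ l ∈ C, l.hasVar u

/-- `i` is the least position of an occurrence of `u` in any literal of `C`. -/
def LeastOccIn (C : Clause V K P) (u : V) (i : ℕ) : Prop :=
  (∃ l ∈ C, l.varAt u i) ∧ ∀ j, (∃ l ∈ C, l.varAt u j) → i ≤ j

/-- `i` is an outer position of the clause `C`. -/
def OuterPosClause (C : Clause V K P) (i : ℕ) : Prop :=
  ∃ u : V, OuterVar C u ∧ LeastOccIn C u i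

/-- `i` is a neutral position of the clause `C`: some term `t`, a constant or an
outer variable of `C`, occupies the `i`-th argument of every literal of `C`. -/
def NeutralPos (C : Clause V K P) (i : ℕ) : Prop :=
  ∃ t : Trm V K,
    ((∃ c, t = Trm.const c) ∨ (∃ u, t = Trm.var u ∧ OuterVar C u)) ∧
    ∀ l ∈ C, l.argAt i = some t

/-- `i` is an outer position of the CNF `φ`: an outer position of some clause and a
neutral position of every clause. -/
def OuterPosCNF (φ : CNF V K P) (i : ℕ) : Prop :=
  (∃ C ∈ φ, OuterPosClause C i) ∧ ∀ D ∈ φ, NeutralPos D i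

/-- Variable `u` occurs at argument position `i` in some literal of `φ`. -/
def VarOccursAt (φ : CNF V K P) (u : V) (i : ℕ) : Prop :=
  ∃ C ∈ φ, ∃ l ∈ C, l.varAt u i

/-- `σ` is the substitution that replaces every variable occurring at an argument
position `i` that is an outer position of `φ` by the constant `c i`, and leaves
all other variables unchanged. -/
def IsOuterSubst (φ : CNF V K P) (c : ℕ → K) (σ : V → Trm V K) : Prop :=
  (∀ u i, OuterPosCNF φ i → VarOccursAt φ u i → σ u = Trm.const (c i)) ∧
  (∀ u, (¬ ∃ i, OuterPosCNF φ i ∧ VarOccursAt φ u i) → σ u = Trm.var u)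

/-- A clause is inseparable if it is a single literal or some variable occurs in
every literal of the clause. -/
def InsepClause (C : Clause V K P) : Prop :=
  (∃ l, C = {l}) ∨ ∃ u : V, ∀ l ∈ C, l.hasVar u

/-- `Kc` is a component of a clause `C`: a non-empty inseparable subclause of `C`
closed under sharing variables with literals of `C`. -/
def IsComponent (Kc C : Clause V K P) : Prop :=
  Kc.Nonempty ∧ Kc ⊆ C ∧ InsepClause Kc ∧
    ∀ a ∈ Kc, ∀ b ∈ C, (∃ u : V, a.hasVar u ∧ b.hasVar u) → b ∈ Kc

/-- All variables shared between `l₁` and `l₂` occur as arguments in positions `≤ m`. -/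
def SharesUpTo (l₁ l₂ : Lit V K P) (m : ℕ) : Prop :=
  ∀ u : V, l₁.hasVar u → l₂.hasVar u →
    (∃ j ≤ m, l₁.varAt u j) ∧ (∃ j ≤ m, l₂.varAt u j)

/-- `i` is a fork index of `φ`: for some clause `C` of `φ` and literals `l₁, l₂` of
`C` (not necessarily distinct), `i` is the minimal value such that every variable
shared between `l₁` and `l₂` occurs at some argument position `≤ i`.  In particular,
`0` is a fork index if some such pair shares no variables. -/
def ForkIndex (φ : CNF V K P) (i : ℕ) : Prop :=
  ∃ C ∈ φ, ∃ l₁ ∈ C, ∃ l₂ ∈ C, IsLeast {m | SharesUpTo l₁ l₂ m} i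

lemma exists_least_shares {l₁ l₂ : Lit V K P} {k : ℕ} (h : SharesUpTo l₁ l₂ k) :
    ∃ n, IsLeast {m | SharesUpTo l₁ l₂ m} n ∧ n ≤ k :=
  ⟨sInf {m | SharesUpTo l₁ l₂ m},
    ⟨Nat.sInf_mem ⟨k, h⟩, fun _ hj => Nat.sInf_le hj⟩, Nat.sInf_le h⟩

lemma Lit.argAt_isSome_of_le {l : Lit V K P} {i j : ℕ} (h0 : 0 < j) (hji : j ≤ i)
    {t : Trm V K} (h : l.argAt i = some t) : ∃ s, l.argAt j = some s := by
  cases i with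
  | zero => omega
  | succ i =>
    cases j with
    | zero => omega
    | succ j =>
      simp only [Lit.argAt] at h ⊢
      have hi : i < l.args.length := (List.getElem?_eq_some_iff.mp h).1
      have hj : j < l.args.length := by omega
      exact ⟨l.args[j], by simp [hj]⟩

/-- If `φ` is a CNF in the QEALM fragment whose minimal fork
index `m` satisfies `m > 0`, then `m` is an outer position of `φ`. -/
theorem statement_14 (φ : CNF V K P) (m : ℕ)
    (hq : QEALM φ) (hmin : IsLeast {i | ForkIndex φ i} m) (hm : 0 < m) :
    OuterPosCNF φ m := by
  -- No pair of literals in a clause of φ shares only variables up to a position < m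
  have hNS : ∀ k, k < m → ∀ C ∈ φ, ∀ l₁ ∈ C, ∀ l₂ ∈ C, ¬ SharesUpTo l₁ l₂ k := by
    intro k hk C hC l₁ h1 l₂ h2 hsh
    obtain ⟨n, hn, hnk⟩ := exists_least_shares hsh
    have := hmin.2 ⟨C, hC, l₁, h1, l₂, h2, hn⟩
    omega
  -- Key: each pair shares a variable whose common first occurrence is ≥ m,
  -- with agreement on all positions up to it
  have hKey : ∀ C ∈ φ, ∀ l₁ ∈ C, ∀ l₂ ∈ C, ∃ u i, m ≤ i ∧ l₁.firstOccAt u i ∧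
      l₂.firstOccAt u i ∧ ∀ j ≤ i, l₁.argAt j = l₂.argAt j := by
    intro C hC l₁ h1 l₂ h2
    have h := hNS (m - 1) (by omega) C hC l₁ h1 l₂ h2
    rw [SharesUpTo] at h
    push_neg at h
    obtain ⟨u, hu1, hu2, hnab⟩ := h
    obtain ⟨i, f1, f2, hag⟩ := hq C hC u l₁ h1 l₂ h2 hu1 hu2
    refine ⟨u, i, ?_, f1, f2, hag⟩
    by_contra hlt
    push_neg at hlt
    exact hnab ⟨i, by omega, f1.1⟩ i (by omega) f2.1
  -- Any two literals of a clause agree at position m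
  have hAgree : ∀ C ∈ φ, ∀ l₁ ∈ C, ∀ l₂ ∈ C, l₁.argAt m = l₂.argAt m := by
    intro C hC l₁ h1 l₂ h2
    obtain ⟨u, i, him, _, _, hag⟩ := hKey C hC l₁ h1 l₂ h2
    exact hag m him
  -- Every literal has a defined argument at position m
  have hSome : ∀ C ∈ φ, ∀ l ∈ C, ∃ t, l.argAt m = some t := by
    intro C hC l hl
    obtain ⟨u, i, him, f1, _, _⟩ := hKey C hC l hl l hl
    exact Lit.argAt_isSome_of_le hm him f1.1
  -- The witness pair for the minimal fork index m
  obtain ⟨C₀, hC₀, l₁, h1, l₂, h2, hL⟩ := hmin.1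
  -- Its shared variable u* has first occurrence exactly m in l₁
  have hnotm1 : ¬ SharesUpTo l₁ l₂ (m - 1) := fun h => by have := hL.2 h; omega
  rw [SharesUpTo] at hnotm1
  push_neg at hnotm1
  obtain ⟨u, hu1, hu2, hnab⟩ := hnotm1
  obtain ⟨i, f1, f2, hag⟩ := hq C₀ hC₀ u l₁ h1 l₂ h2 hu1 hu2
  obtain ⟨⟨j, hjm, hvj⟩, _⟩ := hL.1 u hu1 hu2
  have him : m ≤ i := by
    by_contra hlt
    push_neg at hlt
    exact hnab ⟨i, by omega, f1.1⟩ i (by omega) f2.1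
  have hieq : i = m := le_antisymm (le_trans (f1.2 j hvj) hjm) him
  rw [hieq] at f1 f2 hag
  -- u occurs at position m in l₁, hence (by agreement) in every literal of C₀
  have hu_all : ∀ l ∈ C₀, l.varAt u m := fun l hl => by
    have := hAgree C₀ hC₀ l hl l₁ h1
    unfold Lit.varAt
    rw [this]
    exact f1.1
  constructor
  · -- C₀ has m as an outer position, witnessed by u
    refine ⟨C₀, hC₀, u, fun l hl => ⟨m, hu_all l hl⟩, ⟨l₁, h1, f1.1⟩, ?_⟩
    intro k ⟨l, hl, hvk⟩
    obtain ⟨i', g1, g2, _⟩ := hq C₀ hC₀ u l hl l₁ h1 ⟨k, hvk⟩ hu1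
    have : i' = m := le_antisymm (g2.2 m f1.1) (f1.2 i' g2.1)
    subst this
    exact g1.2 k hvk
  · -- every clause has m as a neutral position
    intro D hD
    rcases D.eq_empty_or_nonempty with rfl | ⟨l₀, hl₀⟩
    · exact ⟨Trm.var u, Or.inr ⟨u, rfl, fun l hl => absurd hl (by simp)⟩,
        fun l hl => absurd hl (by simp)⟩
    · obtain ⟨t, ht⟩ := hSome D hD l₀ hl₀
      have hall : ∀ l ∈ D, l.argAt m = some t := fun l hl =>
        (hAgree D hD l hl l₀ hl₀).trans ht
      refine ⟨t, ?_, hall⟩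
      cases t with
      | const c => exact Or.inl ⟨c, rfl⟩
      | var w => exact Or.inr ⟨w, rfl, fun l hl => ⟨m, hall l hl⟩⟩
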